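/- The language L_{∨,c} = { w ∈ {a,b,c}* : |w|_c = 1 and |w|_a = |w|_b } ∪ { w ∈ {a,b}* : 2·|w|_a = |w|_b } is not accepted by any DFAwtl. -/

import Mathlib

/-- A nondeterministic finite automaton with translucent letters (NFAwtl). -/
structure NFAwtl (Q α : Type) where
  τ : Q → Set α
  I : Set Q
  F : Set Q
  δ : Q → α → Set Q
  tr : ∀ q a, a ∈ τ q → δ q a = ∅

namespace NFAwtl

variable {Q α : Type}

/-- One computation step of an NFAwtl: delete the leftmost non-translucent letter
and change state (the head returns to the left end). -/
def Step (A : NFAwtl Q α) : Q × List α → Q × List α → Prop := fun c c' =>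
  ∃ u a v, c.2 = u ++ a :: v ∧ (∀ x ∈ u, x ∈ A.τ c.1) ∧ a ∉ A.τ c.1 ∧
    c'.1 ∈ A.δ c.1 a ∧ c'.2 = u ++ v

/-- Acceptance: from some initial state, reach a configuration whose remaining
letters are all translucent for a final state. -/
def Accepts (A : NFAwtl Q α) (w : List α) : Prop :=
  ∃ q₀ ∈ A.I, ∃ q w', Relation.ReflTransGen A.Step (q₀, w) (q, w') ∧
    (∀ x ∈ w', x ∈ A.τ q) ∧ q ∈ A.F

def lang (A : NFAwtl Q α) : Set (List α) := { w | A.Accepts w }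

/-- A DFAwtl: single initial state and at most one transition per state/letter. -/
def Deterministic (A : NFAwtl Q α) : Prop :=
  (∃ q₀, A.I = {q₀}) ∧ ∀ q a, (A.δ q a).Subsingleton

end NFAwtl

/-- A repetitive NFAwtl (RNFAwtl): on the end-of-tape marker it may accept
(states in `Facc`) or change state via `δend` and continue. -/
structure RNFAwtl (Q α : Type) where
  τ : Q → Set α
  I : Set Q
  δ : Q → α → Set Q
  δend : Q → Set Q
  Facc : Set Q
  tr : ∀ q a, a ∈ τ q → δ q a = ∅
  accEnd : ∀ q, q ∈ Facc → δend q = ∅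

namespace RNFAwtl

variable {Q α : Type}

/-- One computation step of an RNFAwtl: either delete the leftmost
non-translucent letter, or, when all remaining letters are translucent,
change state via a `◁`-transition and continue. -/
def Step (A : RNFAwtl Q α) : Q × List α → Q × List α → Prop := fun c c' =>
  (∃ u a v, c.2 = u ++ a :: v ∧ (∀ x ∈ u, x ∈ A.τ c.1) ∧ a ∉ A.τ c.1 ∧
    c'.1 ∈ A.δ c.1 a ∧ c'.2 = u ++ v)
  ∨ ((∀ x ∈ c.2, x ∈ A.τ c.1) ∧ c'.1 ∈ A.δend c.1 ∧ c'.2 = c.2)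

def Accepts (A : RNFAwtl Q α) (w : List α) : Prop :=
  ∃ q₀ ∈ A.I, ∃ q w', Relation.ReflTransGen A.Step (q₀, w) (q, w') ∧
    (∀ x ∈ w', x ∈ A.τ q) ∧ q ∈ A.Facc

def lang (A : RNFAwtl Q α) : Set (List α) := { w | A.Accepts w }

/-- An RDFAwtl: single initial state and deterministic transitions. -/
def Deterministic (A : RNFAwtl Q α) : Prop :=
  (∃ q₀, A.I = {q₀}) ∧ (∀ q a, (A.δ q a).Subsingleton) ∧ ∀ q, (A.δend q).Subsingleton

end RNFAwtl

/-- A non-returning repetitive NFAwtl (nr-NFAwtl): the head continues from the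
position of the last deleted letter; on the end-of-tape marker it may change
state and return the head to the left end. -/
structure NrNFAwtl (Q α : Type) where
  τ : Q → Set α
  I : Set Q
  δ : Q → α → Set Q
  δend : Q → Set Q
  Facc : Set Q
  tr : ∀ q a, a ∈ τ q → δ q a = ∅
  accEnd : ∀ q, q ∈ Facc → δend q = ∅

namespace NrNFAwtl

variable {Q α : Type}

/-- Configurations are `(x, q, w)`: `x` is the already-skipped prefix, the head
is on the first letter of `w`. -/
def Step (A : NrNFAwtl Q α) :
    List α × Q × List α → List α × Q × List α → Prop := fun c c' =>
  (∃ u a v, c.2.2 = u ++ a :: v ∧ (∀ x ∈ u, x ∈ A.τ c.2.1) ∧ a ∉ A.τ c.2.1 ∧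
    c'.2.1 ∈ A.δ c.2.1 a ∧ c'.1 = c.1 ++ u ∧ c'.2.2 = v)
  ∨ ((∀ x ∈ c.2.2, x ∈ A.τ c.2.1) ∧ c'.2.1 ∈ A.δend c.2.1 ∧ c'.1 = [] ∧
    c'.2.2 = c.1 ++ c.2.2)

def Accepts (A : NrNFAwtl Q α) (w : List α) : Prop :=
  ∃ q₀ ∈ A.I, ∃ x q w', Relation.ReflTransGen A.Step ([], q₀, w) (x, q, w') ∧
    (∀ y ∈ w', y ∈ A.τ q) ∧ q ∈ A.Facc

def lang (A : NrNFAwtl Q α) : Set (List α) := { w | A.Accepts w }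

def Deterministic (A : NrNFAwtl Q α) : Prop :=
  (∃ q₀, A.I = {q₀}) ∧ (∀ q a, (A.δ q a).Subsingleton) ∧ ∀ q, (A.δend q).Subsingleton

end NrNFAwtl

/-- A non-repetitive non-returning NFAwtl (nr-nr-NFAwtl): non-returning, and it
must halt as soon as all remaining letters to the right are translucent. -/
structure NrnrNFAwtl (Q α : Type) where
  τ : Q → Set α
  I : Set Q
  F : Set Q
  δ : Q → α → Set Q
  tr : ∀ q a, a ∈ τ q → δ q a = ∅

namespace NrnrNFAwtl

variable {Q α : Type}

def Step (A : NrnrNFAwtl Q α) :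
    List α × Q × List α → List α × Q × List α → Prop := fun c c' =>
  ∃ u a v, c.2.2 = u ++ a :: v ∧ (∀ x ∈ u, x ∈ A.τ c.2.1) ∧ a ∉ A.τ c.2.1 ∧
    c'.2.1 ∈ A.δ c.2.1 a ∧ c'.1 = c.1 ++ u ∧ c'.2.2 = v

def Accepts (A : NrnrNFAwtl Q α) (w : List α) : Prop :=
  ∃ q₀ ∈ A.I, ∃ x q w', Relation.ReflTransGen A.Step ([], q₀, w) (x, q, w') ∧
    (∀ y ∈ w', y ∈ A.τ q) ∧ q ∈ A.F

def lang (A : NrnrNFAwtl Q α) : Set (List α) := { w | A.Accepts w }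

def Deterministic (A : NrnrNFAwtl Q α) : Prop :=
  (∃ q₀, A.I = {q₀}) ∧ ∀ q a, (A.δ q a).Subsingleton

end NrnrNFAwtl

/-- Language classes. -/
def NFAwtlLangs (α : Type) [Fintype α] : Set (Set (List α)) :=
  { L | ∃ (Q : Type) (_ : Fintype Q) (A : NFAwtl Q α), A.lang = L }

def DFAwtlLangs (α : Type) [Fintype α] : Set (Set (List α)) :=
  { L | ∃ (Q : Type) (_ : Fintype Q) (A : NFAwtl Q α), A.Deterministic ∧ A.lang = L }

def RNFAwtlLangs (α : Type) [Fintype α] : Set (Set (List α)) :=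
  { L | ∃ (Q : Type) (_ : Fintype Q) (A : RNFAwtl Q α), A.lang = L }

def RDFAwtlLangs (α : Type) [Fintype α] : Set (Set (List α)) :=
  { L | ∃ (Q : Type) (_ : Fintype Q) (A : RNFAwtl Q α), A.Deterministic ∧ A.lang = L }

def NrNFAwtlLangs (α : Type) [Fintype α] : Set (Set (List α)) :=
  { L | ∃ (Q : Type) (_ : Fintype Q) (A : NrNFAwtl Q α), A.lang = L }

def NrDFAwtlLangs (α : Type) [Fintype α] : Set (Set (List α)) :=
  { L | ∃ (Q : Type) (_ : Fintype Q) (A : NrNFAwtl Q α), A.Deterministic ∧ A.lang = L }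

def NrnrNFAwtlLangs (α : Type) [Fintype α] : Set (Set (List α)) :=
  { L | ∃ (Q : Type) (_ : Fintype Q) (A : NrnrNFAwtl Q α), A.lang = L }

def NrnrDFAwtlLangs (α : Type) [Fintype α] : Set (Set (List α)) :=
  { L | ∃ (Q : Type) (_ : Fintype Q) (A : NrnrNFAwtl Q α), A.Deterministic ∧ A.lang = L }

/-- The three-letter alphabet {a, b, c}. -/
inductive Al : Type
  | a | b | c
deriving DecidableEq

instance : Fintype Al where
  elems := {Al.a, Al.b, Al.c}
  complete := by intro x; cases x <;> simp

/-- The language L_{∨,c} = { w ∈ {a,b,c}* : |w|_c = 1, |w|_a = |w|_b }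
    ∪ { w ∈ {a,b}* : 2·|w|_a = |w|_b }. -/
def Lvc : Set (List Al) :=
  { w | w.count Al.c = 1 ∧ w.count Al.a = w.count Al.b } ∪
  { w | Al.c ∉ w ∧ 2 * w.count Al.a = w.count Al.b }

/-!
A deterministic run on `aᵐbᵐ` must read every `b`: if it halted with a `b` left over, further
`b`s appended to the input would just be appended to that halting configuration, which then still
halts with the same verdict, whereas exactly one of `aᵐb²ᵐ`, `aᵐb²ᵐ⁺¹` lies in `Lvc`. So the run
reaches a configuration `(σₘ, a^αₘ)`. By pigeonhole two lengths `m₁ ≠ m₂` share `σ` and whether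
`α = 0`. If `α > 0`, extra leading `a`s go unnoticed by a run that never exhausts its `a`s;
padding and appending `c` then forces `α_{m₁} = α_{m₂}`. But then `a^{m₁}b^{2m₁} ∈ Lvc` and
`a^{m₂}b^{m₂+m₁} ∉ Lvc` reach the same configuration, and a deterministic automaton must give them
the same verdict.
-/

open Relation List

theorem List.exists_of_sublist_replicate_append {α : Type*} {x : α} {i : ℕ} {w v : List α}
    (h : w <+ replicate i x ++ v) : ∃ j ≤ i, ∃ v', v' <+ v ∧ w = replicate j x ++ v' := by
  obtain ⟨l₁, l₂, rfl, h₁, h₂⟩ := sublist_append_iff.1 h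
  obtain ⟨j, hj, rfl⟩ := sublist_replicate_iff.1 h₁
  exact ⟨j, hj, l₂, h₂, rfl⟩

namespace NFAwtl

variable {Q α : Type} {A : NFAwtl Q α}

def Halts (A : NFAwtl Q α) (c : Q × List α) : Prop := ∀ c', ¬ A.Step c c'

def IsAccepting (A : NFAwtl Q α) (c : Q × List α) : Prop :=
  (∀ x ∈ c.2, x ∈ A.τ c.1) ∧ c.1 ∈ A.F

theorem not_step_nil {q : Q} (c : Q × List α) : ¬ A.Step (q, []) c := by
  rintro ⟨u, a, v, h, -⟩
  simp at h

theorem step_cons_iff_of_not_mem {q q' : Q} {x : α} {w w' : List α} (hx : x ∉ A.τ q) :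
    A.Step (q, x :: w) (q', w') ↔ q' ∈ A.δ q x ∧ w' = w := by
  constructor
  · rintro ⟨u, a, v, h, hu, -, hq, rfl⟩
    cases u with
    | nil =>
      obtain ⟨rfl, rfl⟩ := List.cons.inj h
      exact ⟨hq, rfl⟩
    | cons y u =>
      obtain ⟨rfl, -⟩ := List.cons.inj h
      exact absurd (hu x (by simp)) hx
  · rintro ⟨hq, rfl⟩
    exact ⟨[], x, _, rfl, by simp, hx, hq, rfl⟩

theorem step_cons_iff_of_mem {q q' : Q} {x : α} {w w' : List α} (hx : x ∈ A.τ q) :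
    A.Step (q, x :: w) (q', w') ↔ ∃ w'', A.Step (q, w) (q', w'') ∧ w' = x :: w'' := by
  constructor
  · rintro ⟨u, a, v, h, hu, ha, hq, rfl⟩
    cases u with
    | nil =>
      obtain ⟨rfl, -⟩ := List.cons.inj h
      exact absurd hx ha
    | cons y u =>
      obtain ⟨rfl, rfl⟩ := List.cons.inj h
      exact ⟨u ++ v, ⟨u, a, v, rfl, fun z hz => hu z (by simp [hz]), ha, hq, rfl⟩, rfl⟩
  · rintro ⟨-, ⟨u, a, v, h, hu, ha, hq, rfl⟩, rfl⟩
    refine ⟨x :: u, a, v, by simp [← h], ?_, ha, hq, rfl⟩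
    simpa [hx] using hu

theorem Deterministic.step_rightUnique (hA : A.Deterministic) : Relator.RightUnique A.Step := by
  rintro ⟨q, w⟩ ⟨q₁, w₁⟩ ⟨q₂, w₂⟩ h₁ h₂
  induction w generalizing w₁ w₂ with
  | nil => exact absurd h₁ (not_step_nil _)
  | cons x w ih =>
    by_cases hx : x ∈ A.τ q
    · obtain ⟨v₁, h₁', rfl⟩ := (step_cons_iff_of_mem hx).1 h₁
      obtain ⟨v₂, h₂', rfl⟩ := (step_cons_iff_of_mem hx).1 h₂
      obtain ⟨rfl, rfl⟩ := Prod.mk.inj (ih _ _ h₁' h₂')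
      rfl
    · obtain ⟨hq₁, rfl⟩ := (step_cons_iff_of_not_mem hx).1 h₁
      obtain ⟨hq₂, rfl⟩ := (step_cons_iff_of_not_mem hx).1 h₂
      rw [hA.2 q x hq₁ hq₂]

theorem Step.sublist {c c' : Q × List α} (h : A.Step c c') : c'.2 <+ c.2 := by
  obtain ⟨u, a, v, hc, -, -, -, hc'⟩ := h
  rw [hc, hc']
  exact (sublist_cons_self a v).append_left u

theorem Step.length_lt {c c' : Q × List α} (h : A.Step c c') : c'.2.length < c.2.length := by
  obtain ⟨u, a, v, hc, -, -, -, hc'⟩ := h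
  simp [hc, hc']

theorem sublist_of_reflTransGen_step {c c' : Q × List α} (h : ReflTransGen A.Step c c') :
    c'.2 <+ c.2 := by
  induction h with
  | refl => exact .refl _
  | tail _ hs ih => exact hs.sublist.trans ih

theorem Step.append_right {c c' : Q × List α} (h : A.Step c c') (s : List α) :
    A.Step (c.1, c.2 ++ s) (c'.1, c'.2 ++ s) := by
  obtain ⟨u, a, v, hc, hu, ha, hq, hc'⟩ := h
  exact ⟨u, a, v ++ s, by simp [hc], hu, ha, hq, by simp [hc']⟩

theorem reflTransGen_step_append_right {q q' : Q} {w w' : List α}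
    (h : ReflTransGen A.Step (q, w) (q', w')) (s : List α) :
    ReflTransGen A.Step (q, w ++ s) (q', w' ++ s) :=
  ReflTransGen.lift (fun c : Q × List α => (c.1, c.2 ++ s))
    (fun _ _ hc => hc.append_right s) _ _ h

theorem halts_of_forall_mem_τ {c : Q × List α} (h : ∀ x ∈ c.2, x ∈ A.τ c.1) : A.Halts c := by
  rintro c' ⟨u, a, v, hc, -, ha, -⟩
  exact ha (h a (by simp [hc]))

theorem Halts.eq_of_reflTransGen {c c' : Q × List α} (hc : A.Halts c)
    (h : ReflTransGen A.Step c c') : c' = c := by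
  rcases h.cases_head with h | ⟨c₁, h₁, -⟩
  · exact h.symm
  · exact absurd h₁ (hc c₁)

theorem exists_reflTransGen_halts (c : Q × List α) :
    ∃ c', ReflTransGen A.Step c c' ∧ A.Halts c' := by
  by_cases hc : A.Halts c
  · exact ⟨c, .refl, hc⟩
  · obtain ⟨c₁, h₁⟩ := not_forall_not.1 hc
    have := h₁.length_lt
    obtain ⟨c', h', hc'⟩ := exists_reflTransGen_halts c₁
    exact ⟨c', .head h₁ h', hc'⟩
termination_by c.2.length

theorem Halts.append {p : Q} {w s : List α} (h : A.Halts (p, w))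
    (hs : ∀ y ∈ s, y ∈ A.τ p ∨ y ∈ w) : A.Halts (p, w ++ s) := by
  induction w with
  | nil => exact halts_of_forall_mem_τ fun y hy => (hs y hy).resolve_right not_mem_nil
  | cons x w ih =>
    rintro ⟨q', w'⟩ hstep
    by_cases hx : x ∈ A.τ p
    · obtain ⟨w'', hstep, -⟩ := (step_cons_iff_of_mem hx).1 hstep
      have hw : A.Halts (p, w) := fun ⟨q'', v⟩ hv =>
        h _ ((step_cons_iff_of_mem hx).2 ⟨v, hv, rfl⟩)
      have hs' : ∀ y ∈ s, y ∈ A.τ p ∨ y ∈ w := by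
        intro y hy
        rcases hs y hy with hy | hy
        · exact .inl hy
        · rcases mem_cons.1 hy with rfl | hy
          exacts [.inl hx, .inr hy]
      exact ih hw hs' _ hstep
    · obtain ⟨hq', -⟩ := (step_cons_iff_of_not_mem hx).1 hstep
      exact h (q', w) ((step_cons_iff_of_not_mem hx).2 ⟨hq', rfl⟩)

theorem isAccepting_append_iff {p : Q} {w s : List α} (hs : ∀ y ∈ s, y ∈ w) :
    A.IsAccepting (p, w ++ s) ↔ A.IsAccepting (p, w) := by
  simp only [IsAccepting, forall_mem_append, and_congr_left_iff, and_iff_left_iff_imp]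
  exact fun _ hw y hy => hw y (hs y hy)

/-- A leading `x` is either read or skipped; in both cases a second copy of it is harmless. -/
theorem Step.cons_cons {q q' : Q} {x : α} {w w' : List α} (h : A.Step (q, x :: w) (q', x :: w')) :
    A.Step (q, x :: x :: w) (q', x :: x :: w') := by
  by_cases hx : x ∈ A.τ q
  · obtain ⟨w'', h, hw⟩ := (step_cons_iff_of_mem hx).1 h
    obtain rfl := (List.cons.inj hw).2
    exact (step_cons_iff_of_mem hx).2 ⟨_, (step_cons_iff_of_mem hx).2 ⟨_, h, rfl⟩, rfl⟩
  · obtain ⟨hq, rfl⟩ := (step_cons_iff_of_not_mem hx).1 h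
    exact (step_cons_iff_of_not_mem hx).2 ⟨hq, rfl⟩

theorem Step.replicate_add {q q' : Q} {x : α} {i k : ℕ} {v v' : List α}
    (h : A.Step (q, replicate (i + 1) x ++ v) (q', replicate (k + 1) x ++ v')) (s : ℕ) :
    A.Step (q, replicate (i + 1 + s) x ++ v) (q', replicate (k + 1 + s) x ++ v') := by
  induction s with
  | zero => exact h
  | succ s ih =>
    rw [Nat.add_right_comm i, Nat.add_right_comm k, replicate_succ, replicate_succ, cons_append,
      cons_append] at ih
    simpa only [← Nat.add_assoc, Nat.add_right_comm _ 1, replicate_succ, cons_append] using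
      ih.cons_cons

theorem reflTransGen_step_replicate_add {q q' : Q} {x : α} {i k : ℕ} {v v' : List α}
    (hv : x ∉ v) (hk : 0 < k)
    (h : ReflTransGen A.Step (q, replicate i x ++ v) (q', replicate k x ++ v')) (s : ℕ) :
    ReflTransGen A.Step (q, replicate (i + s) x ++ v) (q', replicate (k + s) x ++ v') := by
  have hx : x ∈ replicate k x ++ v' := by simp [hk.ne']
  have hshift : ∀ n u, replicate (n + s) x ++ u = replicate s x ++ (replicate n x ++ u) := by
    intro n u
    rw [Nat.add_comm, replicate_add, append_assoc]
  generalize hc : (q, replicate i x ++ v) = c at h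
  induction h using ReflTransGen.head_induction_on generalizing q i v with
  | refl =>
    obtain ⟨rfl, hw⟩ := Prod.mk.inj hc
    rw [hshift, hshift, hw]
  | @head c c₁ hstep hrest ih =>
    subst hc
    obtain ⟨q₁, w₁⟩ := c₁
    obtain ⟨j, hji, v₁, hv₁, rfl⟩ := exists_of_sublist_replicate_append hstep.sublist
    have hv₁x : x ∉ v₁ := fun h => hv (hv₁.subset h)
    have hj : j ≠ 0 := by
      rintro rfl
      simpa [hv₁x] using (sublist_of_reflTransGen_step hrest).subset hx
    obtain ⟨j, rfl⟩ := Nat.exists_eq_succ_of_ne_zero hj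
    obtain ⟨i, rfl⟩ := Nat.exists_eq_succ_of_ne_zero (by omega : i ≠ 0)
    exact .head (hstep.replicate_add s) (ih hv₁x rfl)

section Determinism

variable {q₀ : Q} (hA : A.Deterministic) (hI : A.I = {q₀})
include hA hI

theorem mem_lang_iff_of_reflTransGen {w : List α} {c : Q × List α}
    (h : ReflTransGen A.Step (q₀, w) c) :
    w ∈ A.lang ↔ ∃ c', ReflTransGen A.Step c c' ∧ A.IsAccepting c' := by
  constructor
  · rintro ⟨q, hq, q', w', hrun, hacc⟩
    rw [hI, Set.mem_singleton_iff] at hq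
    subst hq
    rcases ReflTransGen.total_of_right_unique hA.step_rightUnique h hrun with h' | h'
    · exact ⟨_, h', hacc⟩
    · rw [(halts_of_forall_mem_τ hacc.1).eq_of_reflTransGen h']
      exact ⟨_, .refl, hacc⟩
  · rintro ⟨c', hc', hacc⟩
    exact ⟨q₀, by simp [hI], c'.1, c'.2, h.trans hc', hacc⟩

theorem mem_lang_iff_of_reflTransGen_halts {w : List α} {c : Q × List α}
    (h : ReflTransGen A.Step (q₀, w) c) (hc : A.Halts c) : w ∈ A.lang ↔ A.IsAccepting c := by
  rw [mem_lang_iff_of_reflTransGen hA hI h]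
  constructor
  · rintro ⟨c', hc', hacc⟩
    rwa [hc.eq_of_reflTransGen hc'] at hacc
  · exact fun hacc => ⟨c, .refl, hacc⟩

theorem mem_lang_iff_mem_lang_of_reflTransGen {w w' : List α} {c : Q × List α}
    (h : ReflTransGen A.Step (q₀, w) c) (h' : ReflTransGen A.Step (q₀, w') c) :
    w ∈ A.lang ↔ w' ∈ A.lang := by
  rw [mem_lang_iff_of_reflTransGen hA hI h, mem_lang_iff_of_reflTransGen hA hI h']

end Determinism

end NFAwtl

theorem replicate_append_replicate_mem_Lvc {i j : ℕ} :
    replicate i Al.a ++ replicate j Al.b ∈ Lvc ↔ 2 * i = j := by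
  simp [Lvc, count_replicate]

theorem replicate_append_replicate_append_c_mem_Lvc {i j : ℕ} :
    replicate i Al.a ++ replicate j Al.b ++ [Al.c] ∈ Lvc ↔ i = j := by
  simp [Lvc, count_replicate]

section Run

variable {Q : Type} {A : NFAwtl Q Al} {q₀ : Q}
  (hA : A.Deterministic) (hI : A.I = {q₀}) (hL : A.lang = Lvc)
include hA hI hL

open NFAwtl

theorem exists_reflTransGen_replicate_a (m : ℕ) : ∃ σ α,
    ReflTransGen A.Step (q₀, replicate m Al.a ++ replicate m Al.b) (σ, replicate α Al.a) := by
  obtain ⟨⟨p, w⟩, hrun, hp⟩ :=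
    A.exists_reflTransGen_halts (q₀, replicate m Al.a ++ replicate m Al.b)
  obtain ⟨α, -, v, hv, rfl⟩ :=
    exists_of_sublist_replicate_append (sublist_of_reflTransGen_step hrun)
  obtain ⟨n, -, rfl⟩ := sublist_replicate_iff.1 hv
  rcases n with _ | n
  · exact ⟨p, α, by simpa using hrun⟩
  · have hb : ∀ t, ∀ y ∈ replicate t Al.b, y ∈ replicate α Al.a ++ replicate (n + 1) Al.b :=
      fun t y hy => by simp [eq_of_mem_replicate hy]
    have hmem : ∀ t, replicate m Al.a ++ replicate (m + t) Al.b ∈ Lvc ↔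
        A.IsAccepting (p, replicate α Al.a ++ replicate (n + 1) Al.b) := by
      intro t
      rw [← hL, replicate_add, ← append_assoc, ← isAccepting_append_iff (hb t)]
      exact mem_lang_iff_of_reflTransGen_halts hA hI (reflTransGen_step_append_right hrun _)
        (hp.append fun y hy => .inr (hb t y hy))
    have h := (hmem (m + 1)).2 ((hmem m).1 (replicate_append_replicate_mem_Lvc.2 (by omega)))
    rw [replicate_append_replicate_mem_Lvc] at h
    omega

theorem eq_of_reflTransGen_replicate_a {m₁ m₂ α : ℕ} {σ : Q}
    (h₁ : ReflTransGen A.Step (q₀, replicate m₁ Al.a ++ replicate m₁ Al.b) (σ, replicate α Al.a))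
    (h₂ : ReflTransGen A.Step (q₀, replicate m₂ Al.a ++ replicate m₂ Al.b) (σ, replicate α Al.a)) :
    m₁ = m₂ := by
  have h := mem_lang_iff_mem_lang_of_reflTransGen hA hI
    (reflTransGen_step_append_right h₁ (replicate m₁ Al.b))
    (reflTransGen_step_append_right h₂ (replicate m₁ Al.b))
  rw [hL, append_assoc, append_assoc, ← replicate_add, ← replicate_add,
    replicate_append_replicate_mem_Lvc, replicate_append_replicate_mem_Lvc] at h
  omega

theorem eq_of_reflTransGen_replicate_a_of_le {m₁ m₂ α₁ α₂ : ℕ} {σ : Q}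
    (h₁ : ReflTransGen A.Step (q₀, replicate m₁ Al.a ++ replicate m₁ Al.b) (σ, replicate α₁ Al.a))
    (h₂ : ReflTransGen A.Step (q₀, replicate m₂ Al.a ++ replicate m₂ Al.b) (σ, replicate α₂ Al.a))
    (hα₁ : 0 < α₁) (hle : α₁ ≤ α₂) : α₁ = α₂ := by
  obtain ⟨s, rfl⟩ := Nat.exists_eq_add_of_le hle
  have h₁c : ReflTransGen A.Step (q₀, replicate m₁ Al.a ++ (replicate m₁ Al.b ++ [Al.c]))
      (σ, replicate α₁ Al.a ++ [Al.c]) := by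
    simpa only [append_assoc] using reflTransGen_step_append_right h₁ [Al.c]
  have h₁' := reflTransGen_step_replicate_add (by simp) hα₁ h₁c s
  have h := mem_lang_iff_mem_lang_of_reflTransGen hA hI h₁'
    (reflTransGen_step_append_right h₂ [Al.c])
  rw [hL, ← append_assoc, replicate_append_replicate_append_c_mem_Lvc,
    replicate_append_replicate_append_c_mem_Lvc] at h
  omega

end Run

/-- L_{∨,c} is not accepted by any DFAwtl. -/
theorem Lvc_not_DFAwtl : Lvc ∉ DFAwtlLangs Al := by
  rintro ⟨Q, _, A, hA, hL⟩
  obtain ⟨q₀, hI⟩ := hA.1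
  choose σ α hrun using exists_reflTransGen_replicate_a hA hI hL
  obtain ⟨m₁, m₂, hne, hσα⟩ := Finite.exists_ne_map_eq_of_infinite fun m => (σ m, α m = 0)
  obtain ⟨hσ, hzero⟩ := Prod.mk.inj hσα
  rw [eq_iff_iff] at hzero
  have hrun₁ := hrun m₁
  rw [hσ] at hrun₁
  have hα : α m₁ = α m₂ := by
    by_cases h₁ : α m₁ = 0
    · have h₂ := hzero.1 h₁
      omega
    · have h₂ : α m₂ ≠ 0 := mt hzero.2 h₁
      rcases le_total (α m₁) (α m₂) with hle | hle
      · exact eq_of_reflTransGen_replicate_a_of_le hA hI hL hrun₁ (hrun m₂)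
          (Nat.pos_of_ne_zero h₁) hle
      · exact (eq_of_reflTransGen_replicate_a_of_le hA hI hL (hrun m₂) hrun₁
          (Nat.pos_of_ne_zero h₂) hle).symm
  exact hne (eq_of_reflTransGen_replicate_a hA hI hL hrun₁ (hα ▸ hrun m₂))
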